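/- arXiv:2003.04290 — 5 statements merged into one kernel-verified Lean document; each statement's English description precedes it below -/
import Mathlib

section
/- For a vehicle with dry mass m_d > 0 and N battery stages of masses m_1, ..., m_N > 0 (stage i ejected after depletion), the total hover flight time T = e_b * c_T * Σ_{i=1}^N m_i * (m_d + Σ_{j=i}^N m_j)^{-3/2} is strictly greater for N ≥ 2 equal stages (m_i = m_b/N) than for a single stage of total mass m_b, for any m_b > 0, e_b > 0, c_T > 0. -/
/-- Equal staging with `N ≥ 2` stages strictly beats a single stage of the
same total battery mass `m_b`. -/
theorem equal_staging_beats_single_stage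
    (N : ℕ) (hN : 2 ≤ N) (m_d m_b e_b c_T : ℝ)
    (hmd : 0 < m_d) (hmb : 0 < m_b) (heb : 0 < e_b) (hcT : 0 < c_T) :
    e_b * c_T * m_b * (m_d + m_b) ^ (-(3 : ℝ) / 2) <
      e_b * c_T * m_b / N *
        ∑ i ∈ Finset.range N,
          (m_d + (((i : ℝ) + 1) / N) * m_b) ^ (-(3 : ℝ) / 2) := by
  have hNpos : (0 : ℝ) < N := by positivity
  have hz : (-(3 : ℝ) / 2) < 0 := by norm_num
  have key : (N : ℝ) * (m_d + m_b) ^ (-(3 : ℝ) / 2) <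
      ∑ i ∈ Finset.range N, (m_d + (((i : ℝ) + 1) / N) * m_b) ^ (-(3 : ℝ) / 2) := by
    have hc : (N : ℝ) * (m_d + m_b) ^ (-(3 : ℝ) / 2)
        = ∑ _i ∈ Finset.range N, (m_d + m_b) ^ (-(3 : ℝ) / 2) := by
      simp [Finset.sum_const, nsmul_eq_mul]
    rw [hc]
    refine Finset.sum_lt_sum (fun i hi => ?_) ⟨0, Finset.mem_range.mpr (by omega), ?_⟩
    · refine Real.rpow_le_rpow_of_nonpos (by positivity) ?_ hz.le
      have hi' : (i : ℝ) + 1 ≤ N := by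
        have := Finset.mem_range.mp hi; exact_mod_cast this
      have : ((i : ℝ) + 1) / N ≤ 1 := (div_le_one hNpos).mpr hi'
      nlinarith
    · refine Real.rpow_lt_rpow_of_neg (by positivity) ?_ hz
      have h1 : ((0 : ℕ) : ℝ) + 1 = 1 := by norm_num
      rw [h1]
      have : (1 : ℝ) / N < 1 := by
        rw [div_lt_one hNpos]; exact_mod_cast hN.trans_lt' one_lt_two
      nlinarith
  have h := mul_lt_mul_of_pos_left key (show 0 < e_b * c_T * m_b / N by positivity)
  calc e_b * c_T * m_b * (m_d + m_b) ^ (-(3 : ℝ) / 2)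
      = e_b * c_T * m_b / N * ((N : ℝ) * (m_d + m_b) ^ (-(3 : ℝ) / 2)) := by
        field_simp
    _ < _ := h
end

section
/- Let M > 0 and define q(m) = (M + m)^{-3/2} for m ≥ 0. For any 0 < a < b, (a - b) * q(a + b) + b * q(b) - a * q(a) < 0. -/
open intervalIntegral Set

/-- Key inequality for the optimal staging order: for `M > 0`,
`q m = (M + m)^{-3/2}`, and `0 < a < b`, we have
`(a - b) q(a + b) + b q(b) - a q(a) < 0`. -/
theorem staging_key_inequality
    (M a b : ℝ) (hM : 0 < M) (ha : 0 < a) (hab : a < b) :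
    (a - b) * (M + (a + b)) ^ (-(3 : ℝ) / 2)
      + b * (M + b) ^ (-(3 : ℝ) / 2)
      - a * (M + a) ^ (-(3 : ℝ) / 2) < 0 := by
  set g : ℝ → ℝ := fun t => (3 / 2 : ℝ) * (M + t) ^ (-(5 : ℝ) / 2) with hg
  have hb : 0 < b := ha.trans hab
  have hz : b < a + b := by linarith
  have hpos : ∀ x : ℝ, a ≤ x → 0 < M + x := fun x hx => by linarith
  -- continuity of g on intervals to the right of a
  have hgcont : ∀ s : Set ℝ, (∀ x ∈ s, a ≤ x) → ContinuousOn g s := by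
    intro s hs
    exact continuousOn_const.mul <| (continuousOn_const.add continuousOn_id).rpow_const
      (fun x hx => Or.inl (hpos x (hs x hx)).ne')
  -- derivative of q
  have hderiv : ∀ x : ℝ, a ≤ x → HasDerivAt (fun t => (M + t) ^ (-(3:ℝ)/2)) (-g x) x := by
    intro x hx
    have h1 : HasDerivAt (fun t : ℝ => M + t) 1 x := by
      simpa using (hasDerivAt_id x).const_add M
    have h2 := h1.rpow_const (p := -(3:ℝ)/2) (Or.inl (hpos x hx).ne')
    convert h2 using 1
    rw [hg, show (-(3:ℝ)/2 - 1) = -(5:ℝ)/2 by norm_num]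
    ring
  -- FTC on [a, a+b] and [b, a+b]
  have hftc : ∀ x : ℝ, a ≤ x → x ≤ a + b →
      ∫ t in x..(a+b), g t = (M + x) ^ (-(3:ℝ)/2) - (M + (a+b)) ^ (-(3:ℝ)/2) := by
    intro x hx hxz
    have hint : IntervalIntegrable (fun t => -g t) MeasureTheory.volume x (a+b) := by
      apply ContinuousOn.intervalIntegrable
      apply ContinuousOn.neg
      apply hgcont
      intro y hy
      rcases Set.mem_uIcc.1 hy with h | h
      · exact hx.trans h.1
      · linarith [h.1]
    have := intervalIntegral.integral_eq_sub_of_hasDerivAt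
      (f := fun t => (M + t) ^ (-(3:ℝ)/2)) (f' := fun t => -g t)
      (a := x) (b := a + b)
      (fun y hy => by
        apply hderiv
        rcases Set.mem_uIcc.1 hy with h | h
        · exact hx.trans h.1
        · linarith [h.1]) hint
    have h3 : ∫ t in x..(a+b), -g t = - ∫ t in x..(a+b), g t := by
      simp [intervalIntegral.integral_neg]
    rw [h3] at this
    linarith [this]
  have hA := hftc a le_rfl (by linarith)
  have hB := hftc b hab.le (by linarith)
  -- integrability pieces
  have hint_ab : IntervalIntegrable g MeasureTheory.volume a b :=
    (hgcont (Set.uIcc a b) (fun y hy => by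
      rcases Set.mem_uIcc.1 hy with h | h
      · exact h.1
      · linarith [h.1])).intervalIntegrable
  have hint_bz : IntervalIntegrable g MeasureTheory.volume b (a+b) :=
    (hgcont (Set.uIcc b (a+b)) (fun y hy => by
      rcases Set.mem_uIcc.1 hy with h | h
      · linarith [h.1]
      · linarith [h.1])).intervalIntegrable
  have hsplit : (∫ t in a..b, g t) + ∫ t in b..(a+b), g t = ∫ t in a..(a+b), g t :=
    intervalIntegral.integral_add_adjacent_intervals hint_ab hint_bz
  -- g is antitone on positives
  have hmono : ∀ x y : ℝ, a ≤ x → x ≤ y → g y ≤ g x := by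
    intro x y hx hxy
    apply mul_le_mul_of_nonneg_left _ (by norm_num)
    exact Real.rpow_le_rpow_of_nonpos (hpos x hx) (by linarith) (by norm_num)
  -- bound 1 : ∫_b^{a+b} g ≤ a * g b
  have hbound1 : ∫ t in b..(a+b), g t ≤ a * g b := by
    have := intervalIntegral.integral_mono_on (μ := MeasureTheory.volume)
      (f := g) (g := fun _ => g b) hz.le hint_bz
      (intervalIntegrable_const) (fun x hx => hmono b x hab.le hx.1)
    rw [intervalIntegral.integral_const, smul_eq_mul] at this
    have heq : (a + b - b) * g b = a * g b := by ring
    linarith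
  -- bound 2 : (b - a) * g b < ∫_a^b g
  have hbound2 : (b - a) * g b < ∫ t in a..b, g t := by
    have hlt : (∫ _t in a..b, g b) < ∫ t in a..b, g t := by
      apply intervalIntegral.integral_lt_integral_of_continuousOn_of_le_of_exists_lt hab
        continuousOn_const
        (hgcont (Set.Icc a b) (fun y hy => hy.1))
        (fun x hx => hmono x b hx.1.le hx.2)
      refine ⟨a, Set.left_mem_Icc.2 hab.le, ?_⟩
      apply mul_lt_mul_of_pos_left _ (by norm_num)
      exact Real.rpow_lt_rpow_of_neg (hpos a le_rfl) (by linarith) (by norm_num)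
    rw [intervalIntegral.integral_const, smul_eq_mul] at hlt
    exact hlt
  -- g b positive, ∫_b^{a+b} g nonneg implicitly via bound; combine
  have hmain : b * ∫ t in b..(a+b), g t < a * ∫ t in a..(a+b), g t := by
    have h1 : (b - a) * ∫ t in b..(a+b), g t ≤ (b - a) * (a * g b) :=
      mul_le_mul_of_nonneg_left hbound1 (by linarith)
    have h2 : a * ((b - a) * g b) < a * ∫ t in a..b, g t :=
      mul_lt_mul_of_pos_left hbound2 ha
    have hsplit' : a * (∫ t in a..b, g t) + a * ∫ t in b..(a+b), g t
        = a * ∫ t in a..(a+b), g t := by rw [← hsplit]; ring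
    nlinarith [h1, h2, hsplit']
  rw [hA, hB] at hmain
  nlinarith [hmain]
end

section
/- Given a dry mass m_d > 0 and stage masses m_1, ..., m_N > 0, the staging order maximizing total flight time T(σ) = Σ_{i=1}^N m_{σ(i)} * (m_d + Σ_{j=i}^N m_{σ(j)})^{-3/2} over permutations σ is the decreasing order: any maximizing permutation σ satisfies m_{σ(1)} ≥ m_{σ(2)} ≥ ... ≥ m_{σ(N)}. -/
/-!
Exchange argument. If stages `a < b` are burnt in adjacent phases `k, k + 1` and the mass
during phase `k` is `S`, swapping them changes only these two terms, and changes the total by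
`(b - a) f(S) + a f(S - b) - b f(S - a)` with `f M = M ^ (-3/2)`. As `S - a` lies strictly
between `S - b` and `S`, this is positive by strict convexity of `f`; so a maximizing order
has no adjacent ascent.
-/

open Finset

theorem Real.strictConvexOn_rpow_of_neg {p : ℝ} (hp : p < 0) :
    StrictConvexOn ℝ (Set.Ioi 0) fun x : ℝ ↦ x ^ p := by
  apply strictConvexOn_of_deriv2_pos' (convex_Ioi 0)
  · exact fun x hx ↦ (Real.continuousAt_rpow_const x p (Or.inl hx.ne')).continuousWithinAt
  intro x hx
  rw [Real.iter_deriv_rpow_const]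
  have hp2 : 0 < (descPochhammer ℝ 2).eval p := by
    simp only [descPochhammer_succ_right, descPochhammer_zero, Nat.cast_one, CharP.cast_eq_zero,
      sub_zero, one_mul, Polynomial.eval_mul, Polynomial.eval_X, Polynomial.eval_sub,
      Polynomial.eval_one]
    nlinarith
  exact mul_pos hp2 (Real.rpow_pos_of_pos hx _)

section Staging

variable {ι : Type*} [LinearOrder ι] [LocallyFiniteOrderTop ι]

theorem sum_Ici_comp_swap {M : Type*} [AddCommMonoid M] (x : ι → M) {i k k' : ι}
    (h : i ≤ k ↔ i ≤ k') : ∑ j ∈ Ici i, x (Equiv.swap k k' j) = ∑ j ∈ Ici i, x j :=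
  sum_equiv (Equiv.swap k k') (fun j ↦ by
    simp only [mem_Ici, Equiv.swap_apply_def]; split_ifs <;> simp_all) fun _ _ ↦ rfl

theorem CovBy.sum_Ici_eq_add_sum_Ici {M : Type*} [AddCommMonoid M] (x : ι → M) {k k' : ι}
    (h : k ⋖ k') : ∑ j ∈ Ici k, x j = x k + ∑ j ∈ Ici k', x j := by
  have hIoi : Ioi k = Ici k' := coe_injective (by simpa using h.Ioi_eq)
  rw [Ici_eq_cons_Ioi, sum_cons, hIoi]

variable [Fintype ι]

/-- Stage `x i` is burnt in phase `i`, during which the stages `j ≥ i` are still on board;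
`f M` is the flight time per unit battery mass at total mass `M`. -/
noncomputable def flightTime (f : ℝ → ℝ) (m_d : ℝ) (x : ι → ℝ) : ℝ :=
  ∑ i, x i * f (m_d + ∑ j ∈ Ici i, x j)

variable {f : ℝ → ℝ} {m_d : ℝ} {x : ι → ℝ}

theorem flightTime_lt_flightTime_comp_swap (hf : StrictConvexOn ℝ (Set.Ioi 0) f)
    (hm_d : 0 ≤ m_d) (hx : ∀ i, 0 < x i) {k k' : ι} (hk : k ⋖ k') (hlt : x k < x k') :
    flightTime f m_d x < flightTime f m_d (x ∘ Equiv.swap k k') := by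
  set y := x ∘ Equiv.swap k k'
  let term (z : ι → ℝ) (i : ι) := z i * f (m_d + ∑ j ∈ Ici i, z j)
  have hoff (i : ι) (hi : i ≠ k ∧ i ≠ k') : term y i - term x i = 0 := by
    have hi' : i ≤ k ↔ i ≤ k' := ⟨fun h ↦ h.trans hk.le, fun h ↦ hk.le_of_lt (h.lt_of_ne hi.2)⟩
    simp [term, y, Equiv.swap_apply_of_ne_of_ne hi.1 hi.2, sum_Ici_comp_swap x hi']
  have hgain : flightTime f m_d y - flightTime f m_d x
      = (term y k - term x k) + (term y k' - term x k') := by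
    rw [flightTime, flightTime, ← sum_sub_distrib]
    exact Fintype.sum_eq_add k k' hk.ne hoff
  set B := ∑ j ∈ Ici k', x j
  have hB : x k' ≤ B := single_le_sum (fun j _ ↦ (hx j).le) (mem_Ici.2 le_rfl)
  have hxk : ∑ j ∈ Ici k, x j = x k + B := hk.sum_Ici_eq_add_sum_Ici x
  have hy_k : y k = x k' := Equiv.swap_apply_left k k' ▸ rfl
  have hy_k' : y k' = x k := Equiv.swap_apply_right k k' ▸ rfl
  have hyk : ∑ j ∈ Ici k, y j = x k + B := (sum_Ici_comp_swap x (by simp [hk.le])).trans hxk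
  have hyk' : ∑ j ∈ Ici k', y j = x k + B - x k' := by
    linarith [hk.sum_Ici_eq_add_sum_Ici y]
  have key := hf.secant_strict_mono_aux1 (x := m_d + (x k + B - x k')) (y := m_d + B)
    (z := m_d + (x k + B)) (by simp only [Set.mem_Ioi]; linarith [hx k])
    (by simp only [Set.mem_Ioi]; linarith [hx k]) (by linarith) (by linarith [hx k])
  rw [← sub_pos, hgain]
  simp only [term, hyk, hyk', hxk, hy_k, hy_k']
  ring_nf at key ⊢
  linarith

theorem antitone_comp_of_forall_flightTime_le [LocallyFiniteOrder ι]
    (hf : StrictConvexOn ℝ (Set.Ioi 0) f) (hm_d : 0 ≤ m_d) (hx : ∀ i, 0 < x i)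
    {σ : Equiv.Perm ι}
    (hσ : ∀ τ : Equiv.Perm ι, flightTime f m_d (x ∘ τ) ≤ flightTime f m_d (x ∘ σ)) :
    Antitone (x ∘ σ) := by
  refine (antitone_iff_forall_covBy _).2 fun k k' hk ↦ ?_
  by_contra! hlt
  exact (hσ (σ * Equiv.swap k k')).not_gt
    (flightTime_lt_flightTime_comp_swap hf hm_d (fun i ↦ hx (σ i)) hk hlt)

end Staging

/-- Any staging order maximizing the total flight time stages the batteries
in order of decreasing mass. -/
theorem optimal_staging_order_is_decreasing
    (N : ℕ) (m_d : ℝ) (hmd : 0 < m_d) (m : Fin N → ℝ) (hm : ∀ i, 0 < m i)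
    (σ : Equiv.Perm (Fin N))
    (hopt : ∀ τ : Equiv.Perm (Fin N),
      (∑ i, m (τ i) * (m_d + ∑ j ∈ Finset.Ici i, m (τ j)) ^ (-(3 : ℝ) / 2)) ≤
      (∑ i, m (σ i) * (m_d + ∑ j ∈ Finset.Ici i, m (σ j)) ^ (-(3 : ℝ) / 2))) :
    ∀ i j : Fin N, i ≤ j → m (σ j) ≤ m (σ i) :=
  antitone_comp_of_forall_flightTime_le (Real.strictConvexOn_rpow_of_neg (by norm_num)) hmd.le hm
    hopt
end

section
/- Swapping two adjacent stages so that the heavier is consumed first strictly increases total flight time: for M > 0 and 0 < m_k < m_{k+1}, m_{k+1}*(M + m_k + m_{k+1})^{-3/2} + m_k*(M + m_k)^{-3/2} > m_k*(M + m_k + m_{k+1})^{-3/2} + m_{k+1}*(M + m_{k+1})^{-3/2}. -/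
lemma rpow_neg_three_halves_eq {x : ℝ} (hx : 0 < x) :
    x ^ (-(3 : ℝ) / 2) = (Real.sqrt x ^ 3)⁻¹ := by
  rw [show (-(3 : ℝ) / 2) = -(3 / 2) by ring, Real.rpow_neg hx.le]
  congr 1
  rw [show ((3 : ℝ) / 2) = (1 / 2) * ((3 : ℕ) : ℝ) by push_cast; ring,
    Real.rpow_mul hx.le, Real.rpow_natCast, ← Real.sqrt_eq_rpow]

/-- Swapping two adjacent stages so that the heavier one is consumed first
strictly increases the total flight time. -/
theorem heavier_stage_first_increases_flight_time
    (M mk mk1 : ℝ) (hM : 0 < M) (hmk : 0 < mk) (hlt : mk < mk1) :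
    mk * (M + mk + mk1) ^ (-(3 : ℝ) / 2) + mk1 * (M + mk1) ^ (-(3 : ℝ) / 2) <
      mk1 * (M + mk + mk1) ^ (-(3 : ℝ) / 2) + mk * (M + mk) ^ (-(3 : ℝ) / 2) := by
  have hmk1 : 0 < mk1 := hmk.trans hlt
  have ha : (0:ℝ) < M + mk := by linarith
  have hb : (0:ℝ) < M + mk1 := by linarith
  have hs : (0:ℝ) < M + mk + mk1 := by linarith
  rw [rpow_neg_three_halves_eq ha, rpow_neg_three_halves_eq hb,
    rpow_neg_three_halves_eq hs]
  set a := Real.sqrt (M + mk) with ha'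
  set b := Real.sqrt (M + mk1) with hb'
  set s := Real.sqrt (M + mk + mk1) with hs'
  have hap : 0 < a := Real.sqrt_pos.mpr ha
  have hbp : 0 < b := Real.sqrt_pos.mpr hb
  have hsp : 0 < s := Real.sqrt_pos.mpr hs
  have ha2 : a ^ 2 = M + mk := Real.sq_sqrt ha.le
  have hb2 : b ^ 2 = M + mk1 := Real.sq_sqrt hb.le
  have hs2 : s ^ 2 = M + mk + mk1 := Real.sq_sqrt hs.le
  have hab : a < b := Real.sqrt_lt_sqrt ha.le (by linarith)
  have hbs : b < s := Real.sqrt_lt_sqrt hb.le (by linarith)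
  have hmk' : mk = s ^ 2 - b ^ 2 := by rw [hs2, hb2]; ring
  have hmk1' : mk1 = s ^ 2 - a ^ 2 := by rw [hs2, ha2]; ring
  rw [← sub_pos]
  have expand : mk1 * (s ^ 3)⁻¹ + mk * (a ^ 3)⁻¹ - (mk * (s ^ 3)⁻¹ + mk1 * (b ^ 3)⁻¹)
      = (mk1 * a ^ 3 * b ^ 3 + mk * b ^ 3 * s ^ 3
          - mk * a ^ 3 * b ^ 3 - mk1 * a ^ 3 * s ^ 3) / (a ^ 3 * b ^ 3 * s ^ 3) := by
    field_simp
    ring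
  rw [expand]
  apply div_pos _ (by positivity)
  have has : a < s := hab.trans hbs
  have key : mk1 * a ^ 3 * b ^ 3 + mk * b ^ 3 * s ^ 3
      - mk * a ^ 3 * b ^ 3 - mk1 * a ^ 3 * s ^ 3
      = (s - a) * (s - b) * ((b ^ 3 - a ^ 3) * s ^ 3 + (a + b) * (b ^ 3 - a ^ 3) * s ^ 2
          + a * b * (a + b) * (b ^ 2 - a ^ 2) * s + a ^ 2 * b ^ 2 * (b ^ 2 - a ^ 2)) := by
    rw [hmk', hmk1']
    ring
  rw [key]
  have h1 : 0 < b ^ 3 - a ^ 3 := by nlinarith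
  have h2 : 0 < b ^ 2 - a ^ 2 := by nlinarith
  have h3 : 0 < s - a := by linarith
  have h4 : 0 < s - b := by linarith
  positivity
end

section
/- For equal staging with N stages, total mass budget m_b > 0, and dry mass m_d > 0, the flight time T_N = (e_b c_T m_b / N) Σ_{i=1}^N (m_d + (i/N) m_b)^{-3/2} is strictly increasing in N, i.e., T_{N+1} > T_N for all N ≥ 1. -/
/-!
Up to the factor `e_b c_T m_b`, `T_N` is the right Riemann sum `R_N = (1/N) ∑ f (i/N)` of
`f x = (m_d + x m_b)^(-3/2)` on `[0, 1]`, and `f` is convex and strictly decreasing.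
Each node `i/N` is the convex combination of the neighbouring nodes `i/(N+1)` and `(i+1)/(N+1)`
with weights `(N-i)/N` and `i/N`; summing Jensen's inequality over `i` gives
`N² R_N ≤ (N² - 1) R_{N+1} + f 1`, and `R_{N+1} > f 1` because `f` is strictly decreasing.
-/

open Finset

noncomputable def rightRiemannSum (f : ℝ → ℝ) (n : ℕ) : ℝ :=
  (∑ i ∈ range n, f (((i : ℝ) + 1) / n)) / n

theorem convexOn_rpow_of_nonpos {p : ℝ} (hp : p ≤ 0) :
    ConvexOn ℝ (Set.Ioi 0) fun x : ℝ ↦ x ^ p := by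
  refine convexOn_of_hasDerivWithinAt2_nonneg (convex_Ioi 0)
    (f' := fun x ↦ p * x ^ (p - 1)) (f'' := fun x ↦ p * ((p - 1) * x ^ (p - 1 - 1)))
    ?_ ?_ ?_ ?_
  · exact fun x hx ↦ (Real.continuousAt_rpow_const x p (Or.inl (ne_of_gt hx))).continuousWithinAt
  all_goals rw [interior_Ioi]
  · exact fun x hx ↦ (Real.hasDerivAt_rpow_const (Or.inl (ne_of_gt hx))).hasDerivWithinAt
  · exact fun x hx ↦
      ((Real.hasDerivAt_rpow_const (p := p - 1) (Or.inl (ne_of_gt hx))).const_mul p).hasDerivWithinAt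
  · exact fun x hx ↦ mul_nonneg_of_nonpos_of_nonpos hp
      (mul_nonpos_of_nonpos_of_nonneg (by linarith) (Real.rpow_pos_of_pos hx _).le)

theorem convexOn_add_mul_rpow_of_nonpos {p : ℝ} (hp : p ≤ 0) (a b : ℝ) :
    ConvexOn ℝ {x | 0 < a + x * b} fun x : ℝ ↦ (a + x * b) ^ p :=
  ((convexOn_rpow_of_nonpos hp).translate_right a).comp_linearMap (LinearMap.mulRight ℝ b)

theorem sum_range_sub_mul_add_succ_mul {R : Type*} [CommRing R] (g : ℕ → R) (n : ℕ) :
    ∑ i ∈ range n, (((n : R) - 1 - i) * g i + ((i : R) + 1) * g (i + 1)) =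
      ((n : R) - 1) * ∑ j ∈ range (n + 1), g j + g n := by
  have h (i : ℕ) : ((n : R) - 1 - i) * g i + ((i : R) + 1) * g (i + 1) =
      ((n : R) - 1) * g i + (((i + 1 : ℕ) : R) * g (i + 1) - (i : R) * g i) := by
    push_cast; ring
  rw [sum_congr rfl fun i _ ↦ h i, sum_add_distrib, ← mul_sum,
    sum_range_sub (fun i ↦ (i : R) * g i), sum_range_succ]
  push_cast
  ring

theorem ConvexOn.mul_apply_div_le_of_lt {f : ℝ → ℝ} (hf : ConvexOn ℝ (Set.Ioc 0 1) f)
    {n i : ℕ} (hi : i < n) :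
    (n : ℝ) * f ((i + 1) / n) ≤
      (n - 1 - i) * f ((i + 1) / (n + 1)) + (i + 1) * f ((i + 1 + 1) / (n + 1)) := by
  have hi' : (i : ℝ) + 1 ≤ n := by exact_mod_cast hi
  have hn : (0 : ℝ) < n := by linarith
  have hx : ((i : ℝ) + 1) / (n + 1) ∈ Set.Ioc (0 : ℝ) 1 :=
    ⟨by positivity, div_le_one_of_le₀ (by linarith) (by positivity)⟩
  have hy : ((i : ℝ) + 1 + 1) / (n + 1) ∈ Set.Ioc (0 : ℝ) 1 :=
    ⟨by positivity, div_le_one_of_le₀ (by linarith) (by positivity)⟩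
  have hcomb := hf.2 hx hy (div_nonneg (by linarith) hn.le) (by positivity)
    (show ((n : ℝ) - 1 - i) / n + (i + 1) / n = 1 by field_simp; ring)
  have hpt : ((n : ℝ) - 1 - i) / n * ((i + 1) / (n + 1)) + (i + 1) / n * ((i + 1 + 1) / (n + 1)) =
      (i + 1) / n := by
    field_simp; ring
  simp only [smul_eq_mul, hpt] at hcomb
  calc (n : ℝ) * f ((i + 1) / n)
      ≤ n * ((n - 1 - i) / n * f ((i + 1) / (n + 1)) + (i + 1) / n * f ((i + 1 + 1) / (n + 1))) :=
        mul_le_mul_of_nonneg_left hcomb hn.le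
    _ = _ := by field_simp

theorem StrictAntiOn.mul_apply_one_lt_sum {f : ℝ → ℝ} (hf : StrictAntiOn f (Set.Ioc 0 1))
    {n : ℕ} (hn : 0 < n) :
    ((n : ℝ) + 1) * f 1 < ∑ j ∈ range (n + 1), f (((j : ℝ) + 1) / (n + 1)) := by
  have hmem {j : ℕ} (hj : j ∈ range (n + 1)) : ((j : ℝ) + 1) / (n + 1) ∈ Set.Ioc (0 : ℝ) 1 :=
    ⟨by positivity, div_le_one_of_le₀ (by exact_mod_cast mem_range.1 hj) (by positivity)⟩
  have h1 : (1 : ℝ) ∈ Set.Ioc 0 1 := ⟨one_pos, le_rfl⟩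
  have h0 : ((0 : ℕ) : ℝ) + 1 < n + 1 := by norm_num; exact_mod_cast hn
  calc ((n : ℝ) + 1) * f 1 = ∑ _j ∈ range (n + 1), f 1 := by simp
    _ < _ := sum_lt_sum (fun j hj ↦ hf.antitoneOn (hmem hj) h1 (hmem hj).2)
      ⟨0, by simp, hf (hmem (by simp)) h1 ((div_lt_one (by positivity)).2 h0)⟩

theorem rightRiemannSum_lt_succ {f : ℝ → ℝ} (hconv : ConvexOn ℝ (Set.Ioc 0 1) f)
    (hanti : StrictAntiOn f (Set.Ioc 0 1)) {n : ℕ} (hn : 0 < n) :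
    rightRiemannSum f n < rightRiemannSum f (n + 1) := by
  set S := ∑ i ∈ range n, f (((i : ℝ) + 1) / n)
  set g : ℕ → ℝ := fun j ↦ f (((j : ℝ) + 1) / (n + 1))
  have hS : n * S ≤ (n - 1) * ∑ j ∈ range (n + 1), g j + f 1 := calc
    n * S ≤ ∑ i ∈ range n, (((n : ℝ) - 1 - i) * g i + ((i : ℝ) + 1) * g (i + 1)) := by
      rw [mul_sum]
      refine sum_le_sum fun i hi ↦ ?_
      simpa [g] using hconv.mul_apply_div_le_of_lt (mem_range.1 hi)
    _ = (n - 1) * ∑ j ∈ range (n + 1), g j + f 1 := by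
      rw [sum_range_sub_mul_add_succ_mul, show g n = f 1 from congrArg f (div_self (by positivity))]
  have hG := hanti.mul_apply_one_lt_sum hn
  have hn' : (0 : ℝ) < n := by exact_mod_cast hn
  unfold rightRiemannSum
  push_cast
  rw [div_lt_div_iff₀ hn' (by positivity)]
  nlinarith

/-- For equal staging, the total flight time strictly increases with the number
of stages. -/
theorem equal_staging_flight_time_increasing_in_stages
    (m_d m_b e_b c_T : ℝ) (hmd : 0 < m_d) (hmb : 0 < m_b)
    (heb : 0 < e_b) (hcT : 0 < c_T) :
    ∀ N : ℕ, 1 ≤ N →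
      e_b * c_T * m_b / N *
          ∑ i ∈ Finset.range N, (m_d + (((i : ℝ) + 1) / N) * m_b) ^ (-(3 : ℝ) / 2) <
        e_b * c_T * m_b / (N + 1) *
          ∑ i ∈ Finset.range (N + 1),
            (m_d + (((i : ℝ) + 1) / (N + 1)) * m_b) ^ (-(3 : ℝ) / 2) := by
  intro N hN
  set f : ℝ → ℝ := fun x ↦ (m_d + x * m_b) ^ (-(3 : ℝ) / 2)
  have hbase (x : ℝ) (hx : x ∈ Set.Ioc 0 1) : 0 < m_d + x * m_b := by
    have := hx.1
    positivity
  have hconv : ConvexOn ℝ (Set.Ioc 0 1) f :=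
    (convexOn_add_mul_rpow_of_nonpos (by norm_num) m_d m_b).subset hbase (convex_Ioc 0 1)
  have hanti : StrictAntiOn f (Set.Ioc 0 1) := fun x hx y _ hxy ↦
    Real.rpow_lt_rpow_of_neg (hbase x hx) (by gcongr) (by norm_num)
  have key : e_b * c_T * m_b * rightRiemannSum f N < e_b * c_T * m_b * rightRiemannSum f (N + 1) :=
    mul_lt_mul_of_pos_left (rightRiemannSum_lt_succ hconv hanti hN) (by positivity)
  simp only [rightRiemannSum, Nat.cast_add, Nat.cast_one] at key
  convert key using 1 <;> ring
end
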